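/- With G, c, L as above (G smooth, m ≤ G ≤ M), define F:𝔻→𝔻 by F(re^{iθ}) = r e^{iL(r,θ)} and F(0)=0. Then F is a well-defined smooth map of the disc to itself, and its Jacobian determinant satisfies |det(DF)(re^{iθ})| = L_θ(r,θ) = G(r,θ)/c(r), which is bounded above and below by positive constants depending only on m, M. -/

import Mathlib

open MeasureTheory

lemma memball (r : ℝ) (hr : |r| < 1) (s : ℝ) :
    (r * Complex.exp (Complex.I * s) : ℂ) ∈ Metric.ball (0:ℂ) 1 := by
  simp only [Metric.mem_ball, dist_zero_right, norm_mul, map_mul,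
    Complex.norm_real, Real.norm_eq_abs]
  rw [mul_comm Complex.I, Complex.norm_exp_ofReal_mul_I, mul_one]
  exact hr

lemma gcont (G : ℂ → ℝ) (hG : ContDiffOn ℝ (⊤ : ℕ∞) G (Metric.ball 0 1)) (r : ℝ) (hr : |r| < 1) :
    Continuous (fun s : ℝ => G (r * Complex.exp (Complex.I * s))) :=
  hG.continuousOn.comp_continuous (by fun_prop) (memball r hr)

lemma im_calc (r d L' : ℝ) (E : ℂ) (hE : ‖E‖ = 1) (hr : 0 < r) :
    (1/r) * ((starRingEnd ℂ (1*E + r*(E*(Complex.I*d)))) * ((r:ℂ)*(E*(Complex.I*L')))).im = L' := by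
  have hE2 : E.re^2 + E.im^2 = 1 := by
    have := Complex.sq_norm E
    rw [hE] at this
    simpa [Complex.normSq_apply, sq] using this.symm
  simp only [map_add, map_mul, Complex.mul_im, Complex.mul_re, Complex.conj_re, Complex.conj_im,
    Complex.I_re, Complex.I_im, Complex.ofReal_re, Complex.ofReal_im, Complex.add_re,
    Complex.add_im, Complex.one_re, Complex.one_im, Complex.conj_I,
    Complex.neg_re, Complex.neg_im]
  field_simp
  linear_combination r * L' * hE2

lemma aux_deriv_int (G : ℂ → ℝ) (hG : ContDiffOn ℝ (⊤ : ℕ∞) G (Metric.ball 0 1))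
    (r b : ℝ) (hr0 : 0 < r) (hr1 : r < 1) :
    ∃ d : ℝ, HasDerivAt (fun ρ : ℝ => ∫ s in (0:ℝ)..b, G (ρ * Complex.exp (Complex.I * s))) d r := by
  set r' : ℝ := (1 + r) / 2 with hr'
  have hr'1 : r' < 1 := by rw [hr']; linarith
  have hrr' : r < r' := by rw [hr']; linarith
  set ε : ℝ := (1 - r) / 2 with hε
  have hεpos : 0 < ε := by rw [hε]; linarith
  have hfd : ContinuousOn (fderiv ℝ G) (Metric.ball (0:ℂ) 1) :=
    hG.continuousOn_fderiv_of_isOpen Metric.isOpen_ball (by simp)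
  have hK : Metric.closedBall (0:ℂ) r' ⊆ Metric.ball 0 1 :=
    Metric.closedBall_subset_ball hr'1
  obtain ⟨C, hC⟩ := (isCompact_closedBall (0:ℂ) r').exists_bound_of_continuousOn
    ((hfd.mono hK).norm)
  simp only [norm_norm] at hC
  have hballmem : ∀ x ∈ Metric.ball r ε, ∀ t : ℝ,
      (x * Complex.exp (Complex.I * t) : ℂ) ∈ Metric.closedBall (0:ℂ) r' := by
    intro x hx t
    have : |x| ≤ r' := by
      rw [Real.ball_eq_Ioo] at hx
      rw [abs_le]; constructor <;> [skip; skip] <;>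
        · rcases hx with ⟨h1, h2⟩; rw [hr'] at *; rw [hε] at *; nlinarith [abs_nonneg x]
    simp only [Metric.mem_closedBall, dist_zero_right, norm_mul, map_mul,
      Complex.norm_real, Real.norm_eq_abs]
    rw [mul_comm Complex.I, Complex.norm_exp_ofReal_mul_I, mul_one]
    exact this
  have hdiff : ∀ x ∈ Metric.ball r ε, ∀ t : ℝ,
      HasDerivAt (fun ρ : ℝ => G (ρ * Complex.exp (Complex.I * t)))
        ((fderiv ℝ G (x * Complex.exp (Complex.I * t))) (Complex.exp (Complex.I * t))) x := by
    intro x hx t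
    have hz : (x * Complex.exp (Complex.I * t) : ℂ) ∈ Metric.ball (0:ℂ) 1 :=
      hK (hballmem x hx t)
    have hGd : DifferentiableAt ℝ G (x * Complex.exp (Complex.I * t)) :=
      ((hG.differentiableOn (by simp)).differentiableAt (Metric.isOpen_ball.mem_nhds hz))
    have hlin : HasDerivAt (fun ρ : ℝ => (ρ : ℂ) * Complex.exp (Complex.I * t))
        (Complex.exp (Complex.I * t)) x := by
      simpa using (hasDerivAt_id x).ofReal_comp.mul_const (Complex.exp (Complex.I * t))
    exact hGd.hasFDerivAt.comp_hasDerivAt x hlin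
  have hcont : ∀ x : ℝ, |x| < 1 →
      Continuous (fun s : ℝ => G (x * Complex.exp (Complex.I * s))) :=
    fun x hx => gcont G hG x hx
  have key := intervalIntegral.hasDerivAt_integral_of_dominated_loc_of_deriv_le
    (F := fun (x : ℝ) (t : ℝ) => G (x * Complex.exp (Complex.I * t)))
    (F' := fun (x : ℝ) (t : ℝ) =>
      (fderiv ℝ G (x * Complex.exp (Complex.I * t))) (Complex.exp (Complex.I * t)))
    (x₀ := r) (a := 0) (b := b) (bound := fun _ => C) (μ := volume) (Metric.ball_mem_nhds r hεpos)
    ?_ ?_ ?_ ?_ ?_ ?_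
  · exact ⟨_, key.2⟩
  · filter_upwards [Metric.ball_mem_nhds r hεpos] with x hx
    have hx1 : |x| < 1 := by
      rw [Real.ball_eq_Ioo] at hx
      rw [abs_lt]; constructor <;> (rcases hx with ⟨h1, h2⟩; rw [hε] at *; nlinarith)
    exact (hcont x hx1).aestronglyMeasurable
  · have : |r| < 1 := by rw [abs_lt]; constructor <;> linarith
    exact (hcont r this).intervalIntegrable 0 b
  · apply Continuous.aestronglyMeasurable
    have h1 : Continuous (fun t : ℝ => fderiv ℝ G (r * Complex.exp (Complex.I * t))) := by
      have : |r| < 1 := by rw [abs_lt]; constructor <;> linarith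
      exact hfd.comp_continuous (by fun_prop) (memball r this)
    exact (h1.clm_apply (by fun_prop))
  · filter_upwards with t _ x hx
    calc ‖(fderiv ℝ G (x * Complex.exp (Complex.I * t))) (Complex.exp (Complex.I * t))‖
        ≤ ‖fderiv ℝ G (x * Complex.exp (Complex.I * t))‖ * ‖Complex.exp (Complex.I * t)‖ :=
          ContinuousLinearMap.le_opNorm _ _
      _ ≤ C * 1 := by
          apply mul_le_mul (hC _ (hballmem x hx t)) ?_ (norm_nonneg _)
            ((norm_nonneg _).trans (hC _ (hballmem x hx t)))
          rw [mul_comm Complex.I, Complex.norm_exp_ofReal_mul_I]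
      _ = C := mul_one C
  · exact intervalIntegrable_const
  · filter_upwards with t _ x hx
    exact hdiff x hx t

/-- Angular average of `G` over the circle of radius `r`. -/
noncomputable def cfun (G : ℂ → ℝ) (r : ℝ) : ℝ :=
  (1 / (2 * Real.pi)) * ∫ s in (0:ℝ)..(2 * Real.pi), G (r * Complex.exp (Complex.I * s))

/-- The normalized angular primitive of `G`. -/
noncomputable def Lfun (G : ℂ → ℝ) (r θ : ℝ) : ℝ :=
  (1 / cfun G r) * ∫ s in (0:ℝ)..θ, G (r * Complex.exp (Complex.I * s))

/-- The change of variable `F(r e^{iθ}) = r e^{iL(r,θ)}`, in polar coordinates. -/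
noncomputable def Ffun (G : ℂ → ℝ) (r θ : ℝ) : ℂ :=
  r * Complex.exp (Complex.I * Lfun G r θ)

theorem Ffun_props (G : ℂ → ℝ) (m M : ℝ) (hm : 0 < m)
    (hG : ContDiffOn ℝ (⊤ : ℕ∞) G (Metric.ball 0 1))
    (hlow : ∀ z ∈ Metric.ball (0:ℂ) 1, m ≤ G z)
    (hhigh : ∀ z ∈ Metric.ball (0:ℂ) 1, G z ≤ M) :
    ∀ r θ : ℝ, 0 < r → r < 1 →
      Ffun G r (θ + 2 * Real.pi) = Ffun G r θ ∧
      ‖Ffun G r θ‖ < 1 ∧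
      deriv (fun t => Lfun G r t) θ = G (r * Complex.exp (Complex.I * θ)) / cfun G r ∧
      (1 / r) * ((starRingEnd ℂ (deriv (fun ρ : ℝ => Ffun G ρ θ) r))
            * deriv (fun t : ℝ => Ffun G r t) θ).im
        = G (r * Complex.exp (Complex.I * θ)) / cfun G r ∧
      m / M ≤ G (r * Complex.exp (Complex.I * θ)) / cfun G r ∧
      G (r * Complex.exp (Complex.I * θ)) / cfun G r ≤ M / m := by
  intro r θ hr0 hr1
  have habs : |r| < 1 := by rw [abs_lt]; constructor <;> linarith
  set g : ℝ → ℝ := fun s => G (r * Complex.exp (Complex.I * s)) with hg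
  have gc : Continuous g := gcont G hG r habs
  have hglow : ∀ s, m ≤ g s := fun s => hlow _ (memball r habs s)
  have hghigh : ∀ s, g s ≤ M := fun s => hhigh _ (memball r habs s)
  have hmM : m ≤ M := (hglow 0).trans (hghigh 0)
  have hMpos : 0 < M := lt_of_lt_of_le hm hmM
  have twopi : (0:ℝ) < 2 * Real.pi := by positivity
  -- bounds on cfun
  have hclow : m ≤ cfun G r := by
    have h1 : (∫ _ in (0:ℝ)..(2*Real.pi), m) ≤ ∫ s in (0:ℝ)..(2*Real.pi), g s :=
      intervalIntegral.integral_mono_on twopi.le intervalIntegrable_const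
        (gc.intervalIntegrable 0 (2*Real.pi)) (fun s _ => hglow s)
    rw [intervalIntegral.integral_const, smul_eq_mul, sub_zero] at h1
    rw [cfun]
    rw [div_mul_eq_mul_div, one_mul, le_div_iff₀ twopi]
    linarith
  have hchigh : cfun G r ≤ M := by
    have h1 : (∫ s in (0:ℝ)..(2*Real.pi), g s) ≤ ∫ _ in (0:ℝ)..(2*Real.pi), M :=
      intervalIntegral.integral_mono_on twopi.le (gc.intervalIntegrable 0 (2*Real.pi))
        intervalIntegrable_const (fun s _ => hghigh s)
    rw [intervalIntegral.integral_const, smul_eq_mul, sub_zero] at h1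
    rw [cfun, div_mul_eq_mul_div, one_mul, div_le_iff₀ twopi]
    linarith
  have hcpos : 0 < cfun G r := lt_of_lt_of_le hm hclow
  have hcne : cfun G r ≠ 0 := ne_of_gt hcpos
  -- derivative of Lfun in θ
  set L' : ℝ := g θ / cfun G r with hL'
  have hLθ : HasDerivAt (fun t => Lfun G r t) L' θ := by
    have hFTC : HasDerivAt (fun t => ∫ s in (0:ℝ)..t, g s) (g θ) θ :=
      intervalIntegral.integral_hasDerivAt_right (gc.intervalIntegrable 0 θ)
        (gc.stronglyMeasurableAtFilter _ _) gc.continuousAt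
    have := hFTC.const_mul (1 / cfun G r)
    have heq : (1 / cfun G r) * g θ = L' := by rw [hL']; field_simp
    rw [heq] at this
    exact this
  -- periodicity
  have hper : Function.Periodic g (2 * Real.pi) := by
    intro s
    have : Complex.exp (Complex.I * ((s : ℝ) + 2 * Real.pi)) =
        Complex.exp (Complex.I * s) := by
      rw [show (Complex.I * ((s : ℝ) + 2 * Real.pi) : ℂ)
          = Complex.I * s + 2 * Real.pi * Complex.I by push_cast; ring,
        Complex.exp_add, Complex.exp_two_pi_mul_I, mul_one]
    simp only [hg]
    push_cast
    rw [this]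
  have hint_per : (∫ s in (0:ℝ)..(θ + 2*Real.pi), g s)
      = (∫ s in (0:ℝ)..θ, g s) + ∫ s in (0:ℝ)..(2*Real.pi), g s := by
    rw [← intervalIntegral.integral_add_adjacent_intervals (a := (0:ℝ)) (b := θ)
      (c := θ + 2*Real.pi) (gc.intervalIntegrable 0 θ)
      (gc.intervalIntegrable θ (θ + 2*Real.pi))]
    congr 1
    have := hper.intervalIntegral_add_eq θ 0
    rw [zero_add] at this
    exact this
  have hLper : Lfun G r (θ + 2*Real.pi) = Lfun G r θ + 2 * Real.pi := by
    have hint2 : (∫ s in (0:ℝ)..(2*Real.pi), g s) = 2 * Real.pi * cfun G r := by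
      rw [cfun]; field_simp; rfl
    rw [Lfun, hint_per, mul_add, hint2, Lfun]
    field_simp
    rfl
  constructor
  · -- periodicity of Ffun
    rw [Ffun, Ffun, hLper]
    congr 1
    rw [show (Complex.I * ((Lfun G r θ + 2 * Real.pi : ℝ) : ℂ))
        = Complex.I * (Lfun G r θ : ℝ) + 2 * Real.pi * Complex.I by push_cast; ring,
      Complex.exp_add, Complex.exp_two_pi_mul_I, mul_one]
  refine ⟨?_, ?_, ?_, ?_, ?_⟩
  · -- |Ffun| < 1
    rw [Ffun]
    simp only [norm_mul, Complex.norm_real, Real.norm_eq_abs]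
    rw [mul_comm Complex.I, Complex.norm_exp_ofReal_mul_I, mul_one]
    rwa [abs_of_pos hr0]
  · exact hLθ.deriv
  · -- Jacobian computation
    obtain ⟨dh, hh⟩ := aux_deriv_int G hG r θ hr0 hr1
    obtain ⟨dH, hH⟩ := aux_deriv_int G hG r (2*Real.pi) hr0 hr1
    have hc : HasDerivAt (fun ρ => cfun G ρ) ((1/(2*Real.pi)) * dH) r := by
      simpa [cfun] using hH.const_mul (1/(2*Real.pi))
    obtain ⟨d, hLr⟩ : ∃ d : ℝ, HasDerivAt (fun ρ => Lfun G ρ θ) d r :=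
      ⟨_, by simpa [Lfun, one_div] using (hc.inv hcne).fun_mul hh⟩
    set L : ℝ := Lfun G r θ with hLdef
    set E : ℂ := Complex.exp (Complex.I * (L : ℝ)) with hE
    have hFr : HasDerivAt (fun ρ : ℝ => Ffun G ρ θ)
        (1 * E + (r:ℂ) * (E * (Complex.I * (d:ℝ)))) r := by
      have p1 : HasDerivAt (fun ρ : ℝ => (ρ : ℂ)) 1 r := by
        simpa using (hasDerivAt_id r).ofReal_comp
      have p2 : HasDerivAt (fun ρ : ℝ => Complex.exp (Complex.I * ((Lfun G ρ θ : ℝ) : ℂ)))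
          (E * (Complex.I * (d:ℝ))) r := by
        have := ((hLr.ofReal_comp).const_mul Complex.I).cexp
        simpa [hE, hLdef] using this
      have := p1.fun_mul p2
      simpa [Ffun] using this
    have hFθ : HasDerivAt (fun t : ℝ => Ffun G r t)
        ((r:ℂ) * (E * (Complex.I * (L' : ℝ)))) θ := by
      have := (((hLθ.ofReal_comp).const_mul Complex.I).cexp).const_mul (r : ℂ)
      simpa [Ffun, hE, hLdef, mul_comm] using this
    rw [hFr.deriv, hFθ.deriv]
    have habsE : ‖E‖ = 1 := by
      rw [hE, mul_comm Complex.I, Complex.norm_exp_ofReal_mul_I]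
    exact im_calc r d L' E habsE hr0
  · rw [div_le_div_iff₀ hMpos hcpos]
    nlinarith [hglow θ, hchigh]
  · rw [div_le_div_iff₀ hcpos hm]
    nlinarith [hghigh θ, hclow]
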